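/- arXiv:2009.12078 — 6 statements merged into one kernel-verified Lean document; each statement's English description precedes it below -/
import Mathlib

section
/- Let x*, x_k ∈ ℝⁿ with a group partition 𝒢, constants 0 < δ₁ ≤ δ₂ satisfying 2δ₁ ≤ ‖[x*]_g‖ ≤ 2δ₂ for every group g with [x*]_g ≠ 0, and ε ≥ 0, R > 0 with ‖x_k − x*‖ ≤ R and 2δ₁(2δ₁ − R) ≥ ε(2δ₂ + R)² and R ≤ 2δ₁. Then for every g with [x*]_g ≠ 0: [x_k]_gᵀ[x*]_g ≥ ε‖[x_k]_g‖². -/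
open scoped RealInnerProductSpace

lemma piLp2_apply_norm_le {ι : Type*} [Fintype ι] (m : ι → ℕ)
    (f : PiLp 2 (fun g : ι => EuclideanSpace ℝ (Fin (m g)))) (g : ι) :
    ‖f g‖ ≤ ‖f‖ := by
  have h1 : ‖f g‖ ^ 2 ≤ ‖f‖ ^ 2 := by
    rw [← real_inner_self_eq_norm_sq, ← real_inner_self_eq_norm_sq, PiLp.inner_apply]
    exact Finset.single_le_sum (f := fun i => ⟪f i, f i⟫)
      (fun i _ => real_inner_self_nonneg) (Finset.mem_univ g)
  nlinarith [norm_nonneg f, norm_nonneg (f g)]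

theorem hspg_xstar_in_halfspace
    {ι : Type*} [Fintype ι] (m : ι → ℕ)
    (xstar xk : PiLp 2 (fun g : ι => EuclideanSpace ℝ (Fin (m g))))
    (δ₁ δ₂ ε R : ℝ)
    (hδ₁ : 0 < δ₁) (hδ₁₂ : δ₁ ≤ δ₂)
    (hbound : ∀ g, xstar g ≠ 0 → 2 * δ₁ ≤ ‖xstar g‖ ∧ ‖xstar g‖ ≤ 2 * δ₂)
    (hε : 0 ≤ ε) (hR : 0 < R)
    (hdist : ‖xk - xstar‖ ≤ R)
    (hRineq : 2 * δ₁ * (2 * δ₁ - R) ≥ ε * (2 * δ₂ + R) ^ 2)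
    (hRδ₁ : R ≤ 2 * δ₁) :
    ∀ g, xstar g ≠ 0 → ⟪xk g, xstar g⟫ ≥ ε * ‖xk g‖ ^ 2 := by
  intro g hg
  obtain ⟨hlo, hhi⟩ := hbound g hg
  have hd : ‖xk g - xstar g‖ ≤ R := by
    have := piLp2_apply_norm_le m (xk - xstar) g
    simpa using this.trans hdist
  set u := xstar g
  set v := xk g
  set d := v - u with hdset
  have hvu : v = u + d := by simp [hdset]
  -- norm of v
  have hnv : ‖v‖ ≤ 2 * δ₂ + R := by
    calc ‖v‖ = ‖u + d‖ := by rw [hvu]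
    _ ≤ ‖u‖ + ‖d‖ := norm_add_le _ _
    _ ≤ 2 * δ₂ + R := add_le_add hhi hd
  have hip : ⟪v, u⟫ ≥ ‖u‖ * (‖u‖ - ‖d‖) := by
    have h1 : ⟪v, u⟫ = ‖u‖ ^ 2 + ⟪d, u⟫ := by
      rw [hvu, inner_add_left, real_inner_self_eq_norm_sq]
    have h2 : |⟪d, u⟫| ≤ ‖d‖ * ‖u‖ := abs_real_inner_le_norm d u
    have := neg_abs_le ⟪d, u⟫
    nlinarith
  have key : ⟪v, u⟫ ≥ 2 * δ₁ * (2 * δ₁ - R) := by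
    have h1 : ‖u‖ - ‖d‖ ≥ 2 * δ₁ - R := by linarith
    nlinarith [norm_nonneg (d)]
  have hεv : ε * ‖v‖ ^ 2 ≤ ε * (2 * δ₂ + R) ^ 2 := by
    have : ‖v‖ ^ 2 ≤ (2 * δ₂ + R) ^ 2 := by nlinarith [norm_nonneg v]
    nlinarith
  linarith
end

section
/- Let x, v ∈ ℝᵐ with x ≠ 0, α > 0, ε ∈ [0,1), M > 0 with ‖v‖ ≤ M. Suppose ‖x‖ ≥ 2δ₁ − R and ‖x‖ ≤ 2δ₂ + R for constants with 2δ₁ − R − ε(2δ₂ + R) > 0, and α ≤ (2δ₁ − R − ε(2δ₂ + R))/M. Then (x − αv)ᵀx ≥ ε‖x‖². -/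
open scoped RealInnerProductSpace

theorem hspg_no_false_projection
    {d : ℕ} (x v : EuclideanSpace ℝ (Fin d))
    (α ε M δ₁ δ₂ R : ℝ)
    (hx : x ≠ 0) (hα : 0 < α) (hε0 : 0 ≤ ε) (hε1 : ε < 1)
    (hM : 0 < M) (hv : ‖v‖ ≤ M)
    (hlow : 2 * δ₁ - R ≤ ‖x‖) (hup : ‖x‖ ≤ 2 * δ₂ + R)
    (hpos : 0 < 2 * δ₁ - R - ε * (2 * δ₂ + R))
    (hstep : α ≤ (2 * δ₁ - R - ε * (2 * δ₂ + R)) / M) :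
    ⟪x - α • v, x⟫ ≥ ε * ‖x‖ ^ 2 := by
  have hxn : 0 < ‖x‖ := norm_pos_iff.mpr hx
  have h1 : ⟪x - α • v, x⟫ = ‖x‖ ^ 2 - α * ⟪v, x⟫ := by
    rw [inner_sub_left, real_inner_smul_left, real_inner_self_eq_norm_sq]
  have h2 : ⟪v, x⟫ ≤ M * ‖x‖ :=
    le_trans (real_inner_le_norm v x) (mul_le_mul_of_nonneg_right hv (norm_nonneg x))
  have hαM : α * M ≤ 2 * δ₁ - R - ε * (2 * δ₂ + R) := by
    rw [← le_div_iff₀ hM] at *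
    exact hstep
  have hεx : ε * ‖x‖ ≤ ε * (2 * δ₂ + R) := mul_le_mul_of_nonneg_left hup hε0
  have key : ε * ‖x‖ + α * M ≤ ‖x‖ := by nlinarith
  have h3 : α * ⟪v, x⟫ ≤ α * (M * ‖x‖) :=
    mul_le_mul_of_nonneg_left h2 hα.le
  rw [h1]
  nlinarith [norm_nonneg x]
end

section
/- Let x, v ∈ ℝᵐ, α > 0, ε ∈ [0,1), λ > 0, δ₃ > 0, L > 0. Suppose x ≠ 0, ‖v‖ ≤ L‖x‖ + λ − 2δ₃ (Lipschitz bound via proximity to an optimal group that is zero), and ‖x‖ ≤ 2αδ₃/(1 − ε + αL). Then (x − α(v + λ·x/‖x‖))ᵀx ≤ ε‖x‖². -/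
open scoped RealInnerProductSpace

theorem hspg_sparsity_identification_group
    {d : ℕ} (x v : EuclideanSpace ℝ (Fin d))
    (α ε lam δ₃ L : ℝ)
    (hx : x ≠ 0) (hα : 0 < α) (hε0 : 0 ≤ ε) (hε1 : ε < 1)
    (hlam : 0 < lam) (hδ₃ : 0 < δ₃) (hL : 0 < L)
    (hv : ‖v‖ ≤ L * ‖x‖ + lam - 2 * δ₃)
    (hxnorm : ‖x‖ ≤ 2 * α * δ₃ / (1 - ε + α * L)) :
    ⟪x - α • (v + lam • (‖x‖⁻¹ • x)), x⟫ ≤ ε * ‖x‖ ^ 2 := by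
  have hxn : (0:ℝ) < ‖x‖ := norm_pos_iff.mpr hx
  have hden : (0:ℝ) < 1 - ε + α * L := by nlinarith [mul_pos hα hL]
  have hkey : (1 - ε + α * L) * ‖x‖ ≤ 2 * α * δ₃ := by
    rw [div_eq_mul_inv] at hxnorm
    calc (1 - ε + α * L) * ‖x‖ ≤ (1 - ε + α * L) * (2 * α * δ₃ * (1 - ε + α * L)⁻¹) :=
          by exact mul_le_mul_of_nonneg_left hxnorm hden.le
      _ = 2 * α * δ₃ := by field_simp
  have hinner : ⟪v, x⟫ ≥ -(‖v‖ * ‖x‖) := neg_le_of_abs_le (abs_real_inner_le_norm v x)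
  rw [inner_sub_left, inner_smul_left, inner_add_left, inner_smul_left, inner_smul_left,
    real_inner_self_eq_norm_sq]
  simp only [RCLike.star_def, starRingEnd_apply, star_trivial]
  have h2 : ‖x‖⁻¹ * ‖x‖ ^ 2 = ‖x‖ := by field_simp
  rw [h2]
  nlinarith [mul_le_mul_of_nonneg_left hv (mul_pos hα hxn).le,
    mul_le_mul_of_nonneg_left hinner.le hα.le,
    mul_le_mul_of_nonneg_right hkey hxn.le]
end

section
/- Let Ψ : ℝⁿ → ℝ be differentiable with L-Lipschitz gradient on a convex set containing x and x + αd. Suppose d satisfies, for a group partition 𝒢 split into sets G̃ and Ĝ: [d]_g = −[∇Ψ(x)]_g for g ∈ G̃, [d]_g = −[x]_g/α for g ∈ Ĝ, and [d]_g = 0 otherwise, where for each g ∈ Ĝ we have (1−ε)‖[x]_g‖² ≤ α[∇Ψ(x)]_gᵀ[x]_g for some ε ∈ [0,1). Then Ψ(x + αd) ≤ Ψ(x) − (α − α²L/2)·Σ_{g∈G̃}‖[∇Ψ(x)]_g‖² − ((1−ε)/α − L/2)·Σ_{g∈Ĝ}‖[x]_g‖². -/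
/-!
Along the segment from `x` to `y`, the `L`-Lipschitz gradient makes
`t ↦ Ψ (x + t (y - x)) - t ⟪∇Ψ x, y - x⟫ - (L / 2) t² ‖y - x‖²` nonincreasing, which gives the
descent lemma `Ψ y ≤ Ψ x + ⟪∇Ψ x, y - x⟫ + (L / 2) ‖y - x‖²`. For `y = x + α d`, the inner
product and the norm of `d` split over the groups; the half-space condition bounds the
cross term `∑_{g ∈ Ĝ} ⟪[∇Ψ x]_g, [x]_g⟫` from below by `(1 - ε) / α ∑_{g ∈ Ĝ} ‖[x]_g‖²`.
-/

open scoped RealInnerProductSpace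

section Descent

variable {F : Type*} [NormedAddCommGroup F] [InnerProductSpace ℝ F] [CompleteSpace F]

theorem hasDerivAt_comp_add_smul_of_differentiableAt {Ψ : F → ℝ} {x v : F} {t : ℝ}
    (h : DifferentiableAt ℝ Ψ (x + t • v)) :
    HasDerivAt (fun t : ℝ => Ψ (x + t • v)) ⟪gradient Ψ (x + t • v), v⟫ t := by
  have hline : HasDerivAt (fun t : ℝ => x + t • v) v t := by
    simpa using ((hasDerivAt_id t).smul_const v).const_add x
  have hcomp : HasDerivAt (fun t : ℝ => Ψ (x + t • v))
      (InnerProductSpace.toDual ℝ F (gradient Ψ (x + t • v)) v) t :=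
    h.hasGradientAt.hasFDerivAt.comp_hasDerivAt t hline
  simpa only [InnerProductSpace.toDual_apply_apply] using hcomp

theorem Convex.le_add_inner_gradient_add_sq_of_lipschitz_gradient {Ψ : F → ℝ} {s : Set F}
    (hs : Convex ℝ s) (hdiff : ∀ y ∈ s, DifferentiableAt ℝ Ψ y) {L : ℝ}
    (hLip : ∀ y ∈ s, ∀ z ∈ s, ‖gradient Ψ y - gradient Ψ z‖ ≤ L * ‖y - z‖)
    {x y : F} (hx : x ∈ s) (hy : y ∈ s) :
    Ψ y ≤ Ψ x + ⟪gradient Ψ x, y - x⟫ + L / 2 * ‖y - x‖ ^ 2 := by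
  set v := y - x
  have hmem : ∀ t ∈ Set.Icc (0 : ℝ) 1, x + t • v ∈ s := fun t ht => hs.add_smul_sub_mem hx hy ht
  set h : ℝ → ℝ := fun t => Ψ (x + t • v) - t * ⟪gradient Ψ x, v⟫ - L / 2 * t ^ 2 * ‖v‖ ^ 2
  set h' : ℝ → ℝ := fun t =>
    ⟪gradient Ψ (x + t • v), v⟫ - ⟪gradient Ψ x, v⟫ - L * t * ‖v‖ ^ 2
  have hderiv : ∀ t ∈ Set.Icc (0 : ℝ) 1, HasDerivAt h (h' t) t := fun t ht => by
    have := (((hasDerivAt_comp_add_smul_of_differentiableAt (hdiff _ (hmem t ht))).sub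
      ((hasDerivAt_id t).mul_const ⟪gradient Ψ x, v⟫)).sub
      (((hasDerivAt_pow 2 t).const_mul (L / 2)).mul_const (‖v‖ ^ 2)))
    exact this.congr_deriv (by simp only [h']; ring)
  have hslope : ∀ t ∈ Set.Icc (0 : ℝ) 1, h' t ≤ 0 := fun t ht => by
    have hgrad : ‖gradient Ψ (x + t • v) - gradient Ψ x‖ ≤ L * (t * ‖v‖) := by
      simpa [norm_smul, abs_of_nonneg ht.1] using hLip _ (hmem t ht) _ hx
    calc h' t = ⟪gradient Ψ (x + t • v) - gradient Ψ x, v⟫ - L * t * ‖v‖ ^ 2 := by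
          simp only [h', inner_sub_left]
      _ ≤ ‖gradient Ψ (x + t • v) - gradient Ψ x‖ * ‖v‖ - L * t * ‖v‖ ^ 2 := by
          gcongr; exact real_inner_le_norm _ _
      _ ≤ L * (t * ‖v‖) * ‖v‖ - L * t * ‖v‖ ^ 2 := by gcongr
      _ = 0 := by ring
  have hanti : AntitoneOn h (Set.Icc 0 1) :=
    antitoneOn_of_hasDerivWithinAt_nonpos (f' := h') (convex_Icc 0 1)
      (fun t ht => (hderiv t ht).continuousAt.continuousWithinAt)
      (fun t ht => (hderiv t (interior_subset ht)).hasDerivWithinAt)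
      (fun t ht => hslope t (interior_subset ht))
  have h10 : h 1 ≤ h 0 := hanti (by simp) (by simp) zero_le_one
  simp only [h, v, one_smul, zero_smul, add_zero, add_sub_cancel] at h10
  linarith

end Descent

section GroupSplit

variable {ι : Type*} [Fintype ι] {β : ι → Type*} [∀ i, NormedAddCommGroup (β i)]
  [∀ i, InnerProductSpace ℝ (β i)]

theorem Finset.sum_univ_eq_sum_add_sum_of_disjoint {M : Type*} [AddCommMonoid M] {f : ι → M}
    {s t : Finset ι} (hst : Disjoint s t) (hf : ∀ i, i ∉ s → i ∉ t → f i = 0) :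
    ∑ i, f i = ∑ i ∈ s, f i + ∑ i ∈ t, f i := by
  classical
  rw [← Finset.sum_union hst]
  refine (Finset.sum_subset (Finset.subset_univ _) fun i _ hi => ?_).symm
  exact hf i (fun h => hi (Finset.mem_union_left _ h)) (fun h => hi (Finset.mem_union_right _ h))

theorem PiLp.inner_eq_of_eq_neg_on_disjoint (w a x d : PiLp 2 β) (c : ℝ) {s t : Finset ι}
    (hst : Disjoint s t) (hds : ∀ i ∈ s, d i = -a i) (hdt : ∀ i ∈ t, d i = -(c • x i))
    (hd0 : ∀ i, i ∉ s → i ∉ t → d i = 0) :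
    ⟪w, d⟫ = -∑ i ∈ s, ⟪w i, a i⟫ - c * ∑ i ∈ t, ⟪w i, x i⟫ := by
  rw [PiLp.inner_apply, Finset.sum_univ_eq_sum_add_sum_of_disjoint hst
    fun i hs ht => by rw [hd0 i hs ht, inner_zero_right], Finset.mul_sum,
    ← Finset.sum_neg_distrib, sub_eq_add_neg, ← Finset.sum_neg_distrib]
  congr 1 <;> refine Finset.sum_congr rfl fun i hi => ?_
  · rw [hds i hi, inner_neg_right]
  · rw [hdt i hi, inner_neg_right, real_inner_smul_right]

theorem PiLp.norm_sq_eq_of_eq_neg_on_disjoint (a x d : PiLp 2 β) (c : ℝ) {s t : Finset ι}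
    (hst : Disjoint s t) (hds : ∀ i ∈ s, d i = -a i) (hdt : ∀ i ∈ t, d i = -(c • x i))
    (hd0 : ∀ i, i ∉ s → i ∉ t → d i = 0) :
    ‖d‖ ^ 2 = ∑ i ∈ s, ‖a i‖ ^ 2 + c ^ 2 * ∑ i ∈ t, ‖x i‖ ^ 2 := by
  rw [PiLp.norm_sq_eq_of_L2, Finset.sum_univ_eq_sum_add_sum_of_disjoint hst
    fun i hs ht => by rw [hd0 i hs ht, norm_zero, zero_pow two_ne_zero], Finset.mul_sum]
  congr 1 <;> refine Finset.sum_congr rfl fun i hi => ?_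
  · rw [hds i hi, norm_neg]
  · rw [hdt i hi, norm_neg, norm_smul, Real.norm_eq_abs, mul_pow, sq_abs]

end GroupSplit

theorem halfspace_step_sufficient_decrease_general
    {ι : Type*} [Fintype ι] (m : ι → ℕ)
    (Ψ : PiLp 2 (fun g : ι => EuclideanSpace ℝ (Fin (m g))) → ℝ)
    (s : Set (PiLp 2 (fun g : ι => EuclideanSpace ℝ (Fin (m g)))))
    (hconv : Convex ℝ s)
    (hdiff : ∀ y ∈ s, DifferentiableAt ℝ Ψ y)
    (L α ε : ℝ) (hα : 0 < α)
    (hLip : ∀ y ∈ s, ∀ z ∈ s, ‖gradient Ψ y - gradient Ψ z‖ ≤ L * ‖y - z‖)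
    (x d : PiLp 2 (fun g : ι => EuclideanSpace ℝ (Fin (m g))))
    (hx : x ∈ s) (hxd : x + α • d ∈ s)
    (Gt Gh : Finset ι) (hdisj : Disjoint Gt Gh)
    (hdGt : ∀ g ∈ Gt, d g = -((gradient Ψ x) g))
    (hdGh : ∀ g ∈ Gh, d g = -(α⁻¹ • x g))
    (hd0 : ∀ g, g ∉ Gt → g ∉ Gh → d g = 0)
    (hhalf : ∀ g ∈ Gh, (1 - ε) * ‖x g‖ ^ 2 ≤ α * ⟪(gradient Ψ x) g, x g⟫) :
    Ψ (x + α • d) ≤ Ψ x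
      - (α - α ^ 2 * L / 2) * ∑ g ∈ Gt, ‖(gradient Ψ x) g‖ ^ 2
      - ((1 - ε) / α - L / 2) * ∑ g ∈ Gh, ‖x g‖ ^ 2 := by
  have hdescent := hconv.le_add_inner_gradient_add_sq_of_lipschitz_gradient hdiff hLip hx hxd
  rw [add_sub_cancel_left, real_inner_smul_right, norm_smul, Real.norm_eq_abs, mul_pow, sq_abs,
    PiLp.inner_eq_of_eq_neg_on_disjoint _ _ _ _ _ hdisj hdGt hdGh hd0,
    PiLp.norm_sq_eq_of_eq_neg_on_disjoint _ _ _ _ hdisj hdGt hdGh hd0] at hdescent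
  have hcross : (1 - ε) / α * ∑ g ∈ Gh, ‖x g‖ ^ 2 ≤ ∑ g ∈ Gh, ⟪(gradient Ψ x) g, x g⟫ := by
    rw [div_mul_eq_mul_div, div_le_iff₀' hα, Finset.mul_sum, Finset.mul_sum]
    exact Finset.sum_le_sum hhalf
  simp only [real_inner_self_eq_norm_sq, mul_sub, mul_add, mul_neg, inv_pow,
    mul_inv_cancel_left₀ hα.ne', mul_inv_cancel_left₀ (pow_ne_zero 2 hα.ne')] at hdescent
  linear_combination hdescent + hcross

theorem halfspace_step_sufficient_decrease
    {ι : Type*} [Fintype ι] (m : ι → ℕ)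
    (Ψ : PiLp 2 (fun g : ι => EuclideanSpace ℝ (Fin (m g))) → ℝ)
    (s : Set (PiLp 2 (fun g : ι => EuclideanSpace ℝ (Fin (m g)))))
    (hconv : Convex ℝ s)
    (hdiff : ∀ y ∈ s, DifferentiableAt ℝ Ψ y)
    (L α ε : ℝ) (hL : 0 < L) (hα : 0 < α) (hε0 : 0 ≤ ε) (hε1 : ε < 1)
    (hLip : ∀ y ∈ s, ∀ z ∈ s, ‖gradient Ψ y - gradient Ψ z‖ ≤ L * ‖y - z‖)
    (x d : PiLp 2 (fun g : ι => EuclideanSpace ℝ (Fin (m g))))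
    (hx : x ∈ s) (hxd : x + α • d ∈ s)
    (Gt Gh : Finset ι) (hdisj : Disjoint Gt Gh)
    (hdGt : ∀ g ∈ Gt, d g = -((gradient Ψ x) g))
    (hdGh : ∀ g ∈ Gh, d g = -(α⁻¹ • x g))
    (hd0 : ∀ g, g ∉ Gt → g ∉ Gh → d g = 0)
    (hhalf : ∀ g ∈ Gh, (1 - ε) * ‖x g‖ ^ 2 ≤ α * ⟪(gradient Ψ x) g, x g⟫) :
    Ψ (x + α • d) ≤ Ψ x
      - (α - α ^ 2 * L / 2) * ∑ g ∈ Gt, ‖(gradient Ψ x) g‖ ^ 2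
      - ((1 - ε) / α - L / 2) * ∑ g ∈ Gh, ‖x g‖ ^ 2 :=
  halfspace_step_sufficient_decrease_general m Ψ s hconv hdiff L α ε hα hLip x d hx hxd Gt Gh hdisj
    hdGt hdGh hd0 hhalf
end

section
/- Under the hypotheses of the previous sufficient-decrease setting (d defined groupwise via G̃ and Ĝ, with (1−ε)‖[x]_g‖² < α[∇Ψ(x)]_gᵀ[x]_g for g ∈ Ĝ, ε ∈ [0,1), α > 0), if d ≠ 0 then d is a descent direction: dᵀ∇Ψ(x) < 0. In fact dᵀ∇Ψ(x) ≤ −Σ_{g∈G̃}‖[∇Ψ(x)]_g‖² − (1−ε)/α² · Σ_{g∈Ĝ}‖[x]_g‖². -/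
open scoped RealInnerProductSpace

open Finset

/-! Over `G̃` the step contributes `-‖[∇Ψ(x)]_g‖²`; over `Ĝ` it contributes
`-α⁻¹ ⟪[x]_g, [∇Ψ(x)]_g⟫`, which the half-space condition pushes below `-(1 - ε)/α² ‖[x]_g‖²`.
The resulting bound is strictly negative as soon as one group of `d` is nonzero. -/

theorem PiLp.inner_eq_sum_of_forall_notMem_eq_zero {𝕜 ι : Type*} [RCLike 𝕜] [Fintype ι]
    {E : ι → Type*} [∀ i, NormedAddCommGroup (E i)] [∀ i, InnerProductSpace 𝕜 (E i)]
    {x y : PiLp 2 E} {s : Finset ι} (hx : ∀ i ∉ s, x i = 0) :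
    inner 𝕜 x y = ∑ i ∈ s, inner 𝕜 (x i) (y i) := by
  rw [PiLp.inner_apply]
  exact (sum_subset (subset_univ s) fun i _ hi => by simp [hx i hi]).symm

theorem Finset.sum_norm_sq_pos {ι : Type*} {E : ι → Type*} [∀ i, NormedAddCommGroup (E i)]
    {s : Finset ι} {f : ∀ i, E i} {i : ι} (hi : i ∈ s) (hf : f i ≠ 0) : 0 < ∑ j ∈ s, ‖f j‖ ^ 2 :=
  sum_pos' (fun _ _ => by positivity) ⟨i, hi, by positivity⟩

theorem inner_neg_inv_smul_lt {F : Type*} [NormedAddCommGroup F] [InnerProductSpace ℝ F]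
    {α ε : ℝ} {u v : F} (hα : 0 < α) (h : (1 - ε) * ‖u‖ ^ 2 < α * ⟪v, u⟫) :
    ⟪-(α⁻¹ • u), v⟫ < -((1 - ε) / α ^ 2 * ‖u‖ ^ 2) := by
  rw [inner_neg_left, real_inner_smul_left, real_inner_comm, neg_lt_neg_iff]
  have hα' : 0 < α⁻¹ := inv_pos.2 hα
  calc (1 - ε) / α ^ 2 * ‖u‖ ^ 2 = α⁻¹ * (α⁻¹ * ((1 - ε) * ‖u‖ ^ 2)) := by ring
    _ < α⁻¹ * (α⁻¹ * (α * ⟪v, u⟫)) := by gcongr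
    _ = α⁻¹ * ⟪v, u⟫ := by field_simp

section HalfspaceStep

variable {ι : Type*} {E : ι → Type*} [∀ g, NormedAddCommGroup (E g)]
  [∀ g, InnerProductSpace ℝ (E g)] {α ε : ℝ} {x d v : PiLp 2 E} {Gt Gh : Finset ι}

theorem inner_le_of_halfspace_step [Fintype ι] (hα : 0 < α) (hdisj : Disjoint Gt Gh)
    (hdGt : ∀ g ∈ Gt, d g = -v g) (hdGh : ∀ g ∈ Gh, d g = -(α⁻¹ • x g))
    (hd0 : ∀ g, g ∉ Gt → g ∉ Gh → d g = 0)
    (hhalf : ∀ g ∈ Gh, (1 - ε) * ‖x g‖ ^ 2 < α * ⟪v g, x g⟫) :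
    ⟪d, v⟫ ≤ -∑ g ∈ Gt, ‖v g‖ ^ 2 - (1 - ε) / α ^ 2 * ∑ g ∈ Gh, ‖x g‖ ^ 2 := by
  classical
  have hsupp : ∀ g ∉ Gt ∪ Gh, d g = 0 := fun g hg => by
    rw [mem_union, not_or] at hg
    exact hd0 g hg.1 hg.2
  have hGt : ∑ g ∈ Gt, ⟪d g, v g⟫ = -∑ g ∈ Gt, ‖v g‖ ^ 2 := by
    rw [← sum_neg_distrib]
    refine sum_congr rfl fun g hg => ?_
    rw [hdGt g hg, inner_neg_left, real_inner_self_eq_norm_sq]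
  have hGh : ∑ g ∈ Gh, ⟪d g, v g⟫ ≤ -((1 - ε) / α ^ 2 * ∑ g ∈ Gh, ‖x g‖ ^ 2) := by
    rw [mul_sum, ← sum_neg_distrib]
    refine sum_le_sum fun g hg => ?_
    rw [hdGh g hg]
    exact (inner_neg_inv_smul_lt hα (hhalf g hg)).le
  rw [PiLp.inner_eq_sum_of_forall_notMem_eq_zero hsupp, sum_union hdisj, hGt]
  linarith

theorem sum_norm_sq_add_pos_of_halfspace_step (hα : 0 < α) (hε : ε < 1)
    (hdGt : ∀ g ∈ Gt, d g = -v g) (hdGh : ∀ g ∈ Gh, d g = -(α⁻¹ • x g))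
    (hd0 : ∀ g, g ∉ Gt → g ∉ Gh → d g = 0) (hd : d ≠ 0) :
    0 < ∑ g ∈ Gt, ‖v g‖ ^ 2 + (1 - ε) / α ^ 2 * ∑ g ∈ Gh, ‖x g‖ ^ 2 := by
  obtain ⟨g, hg⟩ : ∃ g, d g ≠ 0 := by
    by_contra! h
    exact hd (PiLp.ext h)
  have hc : 0 < (1 - ε) / α ^ 2 := div_pos (sub_pos.2 hε) (by positivity)
  by_cases hgt : g ∈ Gt
  · have hv : v g ≠ 0 := by rwa [hdGt g hgt, neg_ne_zero] at hg
    have hB : 0 ≤ ∑ g ∈ Gh, ‖x g‖ ^ 2 := sum_nonneg fun _ _ => by positivity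
    exact add_pos_of_pos_of_nonneg (sum_norm_sq_pos hgt hv) (mul_nonneg hc.le hB)
  · have hgh : g ∈ Gh := by_contra fun hgh => hg (hd0 g hgt hgh)
    have hx : x g ≠ 0 := by
      rwa [hdGh g hgh, neg_ne_zero, smul_ne_zero_iff_right (inv_ne_zero hα.ne')] at hg
    have hA : 0 ≤ ∑ g ∈ Gt, ‖v g‖ ^ 2 := sum_nonneg fun _ _ => by positivity
    exact add_pos_of_nonneg_of_pos hA (mul_pos hc (sum_norm_sq_pos hgh hx))

end HalfspaceStep

theorem halfspace_step_descent_direction_general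
    {ι : Type*} [Fintype ι] (m : ι → ℕ)
    (Ψ : PiLp 2 (fun g : ι => EuclideanSpace ℝ (Fin (m g))) → ℝ)
    (α ε : ℝ) (hα : 0 < α) (hε1 : ε < 1)
    (x d : PiLp 2 (fun g : ι => EuclideanSpace ℝ (Fin (m g))))
    (Gt Gh : Finset ι) (hdisj : Disjoint Gt Gh)
    (hdGt : ∀ g ∈ Gt, d g = -((gradient Ψ x) g))
    (hdGh : ∀ g ∈ Gh, d g = -(α⁻¹ • x g))
    (hd0 : ∀ g, g ∉ Gt → g ∉ Gh → d g = 0)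
    (hhalf : ∀ g ∈ Gh, (1 - ε) * ‖x g‖ ^ 2 < α * ⟪(gradient Ψ x) g, x g⟫) :
    ⟪d, gradient Ψ x⟫ ≤ - ∑ g ∈ Gt, ‖(gradient Ψ x) g‖ ^ 2
        - (1 - ε) / α ^ 2 * ∑ g ∈ Gh, ‖x g‖ ^ 2
      ∧ (d ≠ 0 → ⟪d, gradient Ψ x⟫ < 0) := by
  have hbound := inner_le_of_halfspace_step hα hdisj hdGt hdGh hd0 hhalf
  refine ⟨hbound, fun hd => ?_⟩
  have hpos := sum_norm_sq_add_pos_of_halfspace_step hα hε1 hdGt hdGh hd0 hd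
  linarith

theorem halfspace_step_descent_direction
    {ι : Type*} [Fintype ι] (m : ι → ℕ)
    (Ψ : PiLp 2 (fun g : ι => EuclideanSpace ℝ (Fin (m g))) → ℝ)
    (α ε : ℝ) (hα : 0 < α) (hε0 : 0 ≤ ε) (hε1 : ε < 1)
    (x d : PiLp 2 (fun g : ι => EuclideanSpace ℝ (Fin (m g))))
    (hdiff : DifferentiableAt ℝ Ψ x)
    (Gt Gh : Finset ι) (hdisj : Disjoint Gt Gh)
    (hdGt : ∀ g ∈ Gt, d g = -((gradient Ψ x) g))
    (hdGh : ∀ g ∈ Gh, d g = -(α⁻¹ • x g))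
    (hd0 : ∀ g, g ∉ Gt → g ∉ Gh → d g = 0)
    (hhalf : ∀ g ∈ Gh, (1 - ε) * ‖x g‖ ^ 2 < α * ⟪(gradient Ψ x) g, x g⟫) :
    ⟪d, gradient Ψ x⟫ ≤ - ∑ g ∈ Gt, ‖(gradient Ψ x) g‖ ^ 2
        - (1 - ε) / α ^ 2 * ∑ g ∈ Gh, ‖x g‖ ^ 2
      ∧ (d ≠ 0 → ⟪d, gradient Ψ x⟫ < 0) :=
  halfspace_step_descent_direction_general m Ψ α ε hα hε1 x d Gt Gh hdisj hdGt hdGh hd0 hhalf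
end

section
/- Let x, x*, e, g ∈ ℝᵐ, α ∈ (0, 1/L], with g = ∇Ψ(x) satisfying the co-coercivity-type bound (x − x*)ᵀg ≥ ‖g‖²/L (valid for convex Ψ with L-Lipschitz gradient and ∇Ψ(x*) = 0), and suppose additionally ‖g‖ ≤ L‖x − x*‖. Then ‖x − αg − αe − x*‖² ≤ ‖x − x*‖² − (2α/L − α²)‖g‖² + (2α + 2α²L)‖x − x*‖‖e‖ + α²‖e‖². -/
open scoped RealInnerProductSpace

theorem halfspace_distance_recursion
    {m : ℕ} (x xstar e gv : EuclideanSpace ℝ (Fin m))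
    (α L : ℝ) (hL : 0 < L) (hα : 0 < α) (hαL : α ≤ 1 / L)
    (hcoco : ⟪x - xstar, gv⟫ ≥ ‖gv‖ ^ 2 / L)
    (hgv : ‖gv‖ ≤ L * ‖x - xstar‖) :
    ‖x - α • gv - α • e - xstar‖ ^ 2
      ≤ ‖x - xstar‖ ^ 2 - (2 * α / L - α ^ 2) * ‖gv‖ ^ 2
        + (2 * α + 2 * α ^ 2 * L) * ‖x - xstar‖ * ‖e‖ + α ^ 2 * ‖e‖ ^ 2 := by
  have key : x - α • gv - α • e - xstar = (x - xstar) - α • (gv + e) := by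
    rw [smul_add]; abel
  rw [key, norm_sub_sq_real, inner_smul_right, inner_add_right, norm_smul,
    mul_pow, norm_add_sq_real]
  have h1 : |⟪x - xstar, e⟫| ≤ ‖x - xstar‖ * ‖e‖ := abs_real_inner_le_norm _ _
  have h2 : |⟪gv, e⟫| ≤ ‖gv‖ * ‖e‖ := abs_real_inner_le_norm _ _
  have h1' := abs_le.mp h1
  have h2' := abs_le.mp h2
  have hg2 : ‖gv‖ ^ 2 / L ≤ ⟪x - xstar, gv⟫ := hcoco
  have hLne : L ≠ 0 := ne_of_gt hL
  have hco : ‖gv‖ ^ 2 ≤ L * ⟪x - xstar, gv⟫ := by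
    rw [div_le_iff₀ hL] at hg2; linarith [hg2]
  have habs : |α| = α := abs_of_pos hα
  rw [Real.norm_eq_abs, habs]
  have he : (0:ℝ) ≤ ‖e‖ := norm_nonneg _
  have hfrac : 2 * α / L * ‖gv‖ ^ 2 ≤ 2 * α * ⟪x - xstar, gv⟫ := by
    rw [div_mul_eq_mul_div, div_le_iff₀ hL]
    nlinarith [hco]
  have A : α * (-(‖x - xstar‖ * ‖e‖)) ≤ α * ⟪x - xstar, e⟫ :=
    mul_le_mul_of_nonneg_left h1'.1 hα.le
  have B1 : α ^ 2 * ⟪gv, e⟫ ≤ α ^ 2 * (‖gv‖ * ‖e‖) :=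
    mul_le_mul_of_nonneg_left h2'.2 (sq_nonneg α)
  have B2 : ‖gv‖ * ‖e‖ ≤ L * ‖x - xstar‖ * ‖e‖ := mul_le_mul_of_nonneg_right hgv he
  have B3 : α ^ 2 * (‖gv‖ * ‖e‖) ≤ α ^ 2 * (L * ‖x - xstar‖ * ‖e‖) :=
    mul_le_mul_of_nonneg_left B2 (sq_nonneg α)
  nlinarith [A, B1, B3, hfrac]
end
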